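/- arXiv:2409.13195 — 3 statements merged into one kernel-verified Lean document; each statement's English description precedes it below -/
import Mathlib

section
/- Let p̂(t) and p̂(t+Δt) be given by affine maps of (p₀,k): p̂(t) = p₀ + C_t k + d_t and p̂(t+Δt) = p₀ + C_{t+Δt} k + d_{t+Δt}. Fix an obstacle Õ ⊂ ℝ^{n_p}, and define B_t = {q ∈ ℝ^{n_p} : q + C_t k + d_t ∈ Õ} and B_{t+Δt} = {q : q + C_{t+Δt} k + d_{t+Δt} ∈ Õ} (with the fixed k). If there exists α ∈ [0,1] with p̂(t) + α(p̂(t+Δt) − p̂(t)) ∈ Õ, then p₀ ∈ conv(B_t ∪ B_{t+Δt}); specifically p₀ = p₁ + α(p₂ − p₁) with p₁ = p₀ + α p̂_d ∈ B_t and p₂ = p₀ + (α−1) p̂_d ∈ B_{t+Δt}, where p̂_d = (C_{t+Δt} − C_t)k + d_{t+Δt} − d_t. -/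
/-!
Write `u = C_t k + d_t`, `u' = C_{t+Δt} k + d_{t+Δt}`, so that `p̂_d = u' - u`. Translating
`p₀` by `α p̂_d` moves `p̂(t)` onto the colliding point `p̂(t) + α (p̂(t+Δt) - p̂(t))`, and so does
translating by `(α - 1) p̂_d` for `p̂(t+Δt)`. The two translates differ by `-p̂_d`, so `p₀` is
their convex combination with weights `1 - α` and `α`.
-/

open Set

section Backprojection

variable {R E : Type*} [CommRing R] [AddCommGroup E] [Module R E] {O : Set E} {p u u' : E} {α : R}

theorem add_smul_sub_add_mem_of_mem (h : p + u + α • (p + u' - (p + u)) ∈ O) :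
    p + α • (u' - u) ∈ {q | q + u ∈ O} := by
  change _ + u ∈ O
  convert h using 1
  module

theorem add_sub_one_smul_sub_add_mem_of_mem (h : p + u + α • (p + u' - (p + u)) ∈ O) :
    p + (α - 1) • (u' - u) ∈ {q | q + u' ∈ O} := by
  change _ + u' ∈ O
  convert h using 1
  module

theorem eq_add_smul_add_sub_one_smul_sub (p v : E) (α : R) :
    p = p + α • v + α • (p + (α - 1) • v - (p + α • v)) := by
  module

end Backprojection

theorem mem_convexHull_union_of_add_smul_sub_mem {𝕜 E : Type*} [Field 𝕜] [LinearOrder 𝕜]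
    [IsStrictOrderedRing 𝕜] [AddCommGroup E] [Module 𝕜 E] {O : Set E} {p u u' : E} {α : 𝕜}
    (hα : α ∈ Icc 0 1) (h : p + u + α • (p + u' - (p + u)) ∈ O) :
    p ∈ convexHull 𝕜 ({q | q + u ∈ O} ∪ {q | q + u' ∈ O}) := by
  rw [eq_add_smul_add_sub_one_smul_sub p (u' - u) α]
  exact (convex_convexHull 𝕜 _).add_smul_sub_mem
    (subset_convexHull 𝕜 _ (mem_union_left _ (add_smul_sub_add_mem_of_mem h)))
    (subset_convexHull 𝕜 _ (mem_union_right _ (add_sub_one_smul_sub_add_mem_of_mem h))) hα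

/-- If the interpolated model trajectory point lies in the obstacle, then the
initial state lies in the convex hull of the backprojected obstacles; in fact
`p₀ = p₁ + α(p₂ − p₁)` with explicit `p₁ ∈ B_t`, `p₂ ∈ B_{t+Δt}`. -/
theorem avoid_set_convex_hull_membership
    {np nk : ℕ}
    (p0 : Fin np → ℝ) (k : Fin nk → ℝ)
    (Ct Ct' : Matrix (Fin np) (Fin nk) ℝ) (dt dt' : Fin np → ℝ)
    (O : Set (Fin np → ℝ)) (α : ℝ) (hα0 : 0 ≤ α) (hα1 : α ≤ 1)
    (hcol : (p0 + Ct.mulVec k + dt) +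
        α • ((p0 + Ct'.mulVec k + dt') - (p0 + Ct.mulVec k + dt)) ∈ O) :
    (p0 + α • ((Ct' - Ct).mulVec k + dt' - dt))
        ∈ {q : Fin np → ℝ | q + Ct.mulVec k + dt ∈ O} ∧
    (p0 + (α - 1) • ((Ct' - Ct).mulVec k + dt' - dt))
        ∈ {q : Fin np → ℝ | q + Ct'.mulVec k + dt' ∈ O} ∧
    p0 = (p0 + α • ((Ct' - Ct).mulVec k + dt' - dt)) +
        α • ((p0 + (α - 1) • ((Ct' - Ct).mulVec k + dt' - dt)) -
             (p0 + α • ((Ct' - Ct).mulVec k + dt' - dt))) ∧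
    p0 ∈ convexHull ℝ
      ({q : Fin np → ℝ | q + Ct.mulVec k + dt ∈ O} ∪
       {q : Fin np → ℝ | q + Ct'.mulVec k + dt' ∈ O}) := by
  have hdiff : (Ct' - Ct).mulVec k + dt' - dt = Ct'.mulVec k + dt' - (Ct.mulVec k + dt) := by
    rw [Matrix.sub_mulVec]
    abel
  have hcol' : p0 + (Ct.mulVec k + dt) +
      α • (p0 + (Ct'.mulVec k + dt') - (p0 + (Ct.mulVec k + dt))) ∈ O := by
    simpa only [add_assoc] using hcol
  refine ⟨?_, ?_, eq_add_smul_add_sub_one_smul_sub _ _ _, ?_⟩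
  · rw [hdiff]
    simpa only [add_assoc] using add_smul_sub_add_mem_of_mem hcol'
  · rw [hdiff]
    simpa only [add_assoc] using add_sub_one_smul_sub_add_mem_of_mem hcol'
  · simpa only [add_assoc] using mem_convexHull_union_of_add_smul_sub_mem ⟨hα0, hα1⟩ hcol'
end

section
/- The Pontryagin difference of an H-polytope H(A,b) by a compact set E equals the H-polytope H(A, b − c), where cᵢ = sup_{e ∈ E} (Ae)ᵢ is the support function of E in the direction of the i-th row of A. -/
/-- Pontryagin difference: `A ⊖ E = {x : x + e ∈ A for all e ∈ E}`. -/
def pontryaginDiff {n : ℕ} (A E : Set (Fin n → ℝ)) : Set (Fin n → ℝ) :=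
  {x | ∀ e ∈ E, x + e ∈ A}

theorem le_sub_csSup_image_iff {α : Type*} {E : Set α} (hE : E.Nonempty) {f : α → ℝ}
    (hf : BddAbove (f '' E)) (a c : ℝ) :
    a ≤ c - sSup (f '' E) ↔ ∀ e ∈ E, a + f e ≤ c := by
  rw [le_sub_comm, csSup_le_iff hf (hE.image f), Set.forall_mem_image]
  simp only [le_sub_iff_add_le']

theorem Matrix.continuous_mulVec_apply {m n : Type*} [Fintype n] (A : Matrix m n ℝ) (i : m) :
    Continuous fun x : n → ℝ => A.mulVec x i := by
  fun_prop

/-- The Pontryagin difference of an H-polytope by a nonempty compact set `E`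
is the H-polytope obtained by tightening each offset by the support function
of `E` in the direction of the corresponding row. -/
theorem hpolytope_pontryagin_diff
    (n h : ℕ) (A : Matrix (Fin h) (Fin n) ℝ) (b : Fin h → ℝ)
    (E : Set (Fin n → ℝ)) (hE : E.Nonempty) (hEc : IsCompact E) :
    pontryaginDiff {x : Fin n → ℝ | A.mulVec x ≤ b} E
      = {x : Fin n → ℝ |
          A.mulVec x ≤ b - fun i => sSup ((fun e => A.mulVec e i) '' E)} := by
  ext x
  simp only [pontryaginDiff, Set.mem_ofPred_eq, Pi.le_def, Matrix.mulVec_add, Pi.add_apply,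
    Pi.sub_apply, le_sub_csSup_image_iff hE (hEc.image (A.continuous_mulVec_apply _)).bddAbove]
  exact ⟨fun hx i e he => hx e he i, fun hx e he i => hx i e he⟩
end

section
/- Let Õ ⊂ ℝ^{n_p} be convex. With the notation of the avoid-set theorem, the set of p₀ such that the interpolated segment {p̂(t) + α(p̂(t+Δt) − p̂(t)) : α ∈ [0,1]} (with fixed k) intersects Õ is contained in conv(B_t ∪ B_{t+Δt}), where B_s = Õ − (C_s k + d_s) for s ∈ {t, t+Δt}; moreover this containment is actually an equality when Õ is convex. -/
/-! The segment from `p + u` to `p + v` meets `O` exactly when `p ∈ O - [u, v]`. Since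
`[u, v] = conv {u, v}`, `O = conv O` and `conv` commutes with pointwise subtraction,
`O - [u, v] = conv (O - {u, v}) = conv ((O - u) ∪ (O - v))`. -/

open Set Pointwise

variable {𝕜 E : Type*} [Field 𝕜] [LinearOrder 𝕜] [IsStrictOrderedRing 𝕜]
  [AddCommGroup E] [Module 𝕜 E]

theorem setOf_translated_segment_meets_eq_sub_segment (O : Set E) (u v : E) :
    {p : E | ∃ α ∈ Icc (0 : 𝕜) 1, (p + u) + α • ((p + v) - (p + u)) ∈ O} =
      O - segment 𝕜 u v := by
  ext p
  have hpoint (α : 𝕜) : (p + u) + α • ((p + v) - (p + u)) = p + (u + α • (v - u)) := by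
    abel_nf
  simp only [mem_ofPred_eq, mem_sub, segment_eq_image', mem_image, hpoint]
  constructor
  · rintro ⟨α, hα, hmem⟩
    exact ⟨_, hmem, _, ⟨α, hα, rfl⟩, add_sub_cancel_right p _⟩
  · rintro ⟨_, hmem, _, ⟨α, hα, rfl⟩, rfl⟩
    exact ⟨α, hα, by rwa [sub_add_cancel]⟩

theorem Convex.sub_segment_eq_convexHull_union {O : Set E} (hO : Convex 𝕜 O) (u v : E) :
    O - segment 𝕜 u v = convexHull 𝕜 ((· - u) '' O ∪ (· - v) '' O) := by
  rw [← sub_singleton, ← sub_singleton, ← sub_union, ← insert_eq, convexHull_sub,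
    convexHull_pair, hO.convexHull_eq]

/-- For a convex obstacle, the set of initial states whose interpolated model
segment hits the obstacle equals the convex hull of the two translated
backprojections. -/
theorem avoid_set_eq_convexHull
    {np nk : ℕ} (k : Fin nk → ℝ)
    (Ct Ct' : Matrix (Fin np) (Fin nk) ℝ) (dt dt' : Fin np → ℝ)
    (O : Set (Fin np → ℝ)) (hO : Convex ℝ O) :
    {p0 : Fin np → ℝ | ∃ α ∈ Set.Icc (0 : ℝ) 1,
        (p0 + Ct.mulVec k + dt) +
          α • ((p0 + Ct'.mulVec k + dt') - (p0 + Ct.mulVec k + dt)) ∈ O}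
      = convexHull ℝ
          (((fun x => x - (Ct.mulVec k + dt)) '' O) ∪
           ((fun x => x - (Ct'.mulVec k + dt')) '' O)) := by
  rw [← hO.sub_segment_eq_convexHull_union, ← setOf_translated_segment_meets_eq_sub_segment]
  simp only [add_assoc]
end
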